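/- Let d ≥ 1 and let ρ_t(x) = (2πt)^{-d/2} exp(−|x|²/(2t)) denote the standard heat kernel on ℝ^d. There exist constants C > 0, c > 0 and δ₀ ∈ (0, 1/2), depending only on d, such that for all T > 0, all ℓ > 0 with ℓ/T ≤ δ₀, and all y ∈ ℝ^d, ∫_{ℝ^d} ρ_ℓ(Z) · |ρ_{T/2−ℓ}(√T·y − Z) / ρ_{T/2}(√T·y) − 1| dZ ≤ C · exp(c·(ℓ/T)·|y|²) · (ℓ/T)^{1/2} · (|y|² + 1). -/

import Mathlib

/-
Write `x = √T • y` and `s = T / 2`. By Chapman–Kolmogorov, `Z ↦ ρ_{s-ℓ}(x - Z) / ρ_s(x)` has mean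
`1` under `ρ_ℓ`, and completing the square once more gives its second moment in closed form,
`(1 - (ℓ/s)²)^{-d/2} exp (ℓ |x|² / (s (s + ℓ)))`. For `ℓ/T ≤ 1/4` the variance is therefore at
most `e^u - 1 ≤ u e^u` with `u = (d + 4) (ℓ/T) (|y|² + 1)`, and the `L¹(ρ_ℓ)` deviation is at most
the square root of the variance.
-/

open MeasureTheory Real

/-- The standard heat kernel `ρ_t(z) = (2πt)^{-d/2} exp(-|z|²/(2t))` on `ℝ^d`. -/
noncomputable def heatKernel (d : ℕ) (t : ℝ) (z : EuclideanSpace ℝ (Fin d)) : ℝ :=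
  (2 * π * t) ^ (-(d : ℝ) / 2) * Real.exp (-‖z‖ ^ 2 / (2 * t))

lemma inv_one_sub_le_exp_two_mul {a : ℝ} (ha : 0 ≤ a) (ha2 : a ≤ 1 / 2) :
    (1 - a)⁻¹ ≤ exp (2 * a) := by
  rw [inv_le_iff_one_le_mul₀' (by linarith)]
  nlinarith [add_one_le_exp (2 * a)]

lemma integral_mul_abs_le_sqrt_of_integral_mul_sq_le {α : Type*} [MeasurableSpace α]
    {μ : Measure α} {p g : α → ℝ} {V : ℝ} (hp : 0 ≤ p) (hpi : Integrable p μ)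
    (hp1 : ∫ a, p a ∂μ = 1) (hpg : Integrable (fun a => p a * g a ^ 2) μ)
    (hV : ∫ a, p a * g a ^ 2 ∂μ ≤ V) (hV0 : 0 < V) :
    ∫ a, p a * |g a| ∂μ ≤ √V := by
  set m := √V
  have hm : 0 < m := sqrt_pos.mpr hV0
  have hpointwise (a : α) : p a * |g a| ≤ m / 2 * p a + p a * g a ^ 2 / (2 * m) := by
    have hgap : m / 2 * p a + p a * g a ^ 2 / (2 * m) - p a * |g a| =
        p a * (|g a| - m) ^ 2 / (2 * m) := by
      rw [← sq_abs (g a)]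
      field_simp
      ring
    have : 0 ≤ p a * (|g a| - m) ^ 2 / (2 * m) :=
      div_nonneg (mul_nonneg (hp a) (sq_nonneg _)) (by positivity)
    linarith
  calc ∫ a, p a * |g a| ∂μ
      ≤ ∫ a, (m / 2 * p a + p a * g a ^ 2 / (2 * m)) ∂μ :=
        integral_mono_of_nonneg (.of_forall fun a => mul_nonneg (hp a) (abs_nonneg _))
          ((hpi.const_mul _).add (hpg.div_const _)) (.of_forall hpointwise)
    _ = m / 2 + (∫ a, p a * g a ^ 2 ∂μ) / (2 * m) := by
        rw [integral_add (hpi.const_mul _) (hpg.div_const _), integral_const_mul, integral_div,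
          hp1, mul_one]
    _ ≤ m / 2 + V / (2 * m) := by gcongr
    _ = m := by
        rw [← sq_sqrt hV0.le]
        field_simp
        ring

lemma exp_sub_one_le_mul_exp (u : ℝ) : exp u - 1 ≤ u * exp u := by
  have h := mul_le_mul_of_nonneg_left (add_one_le_exp (-u)) (exp_pos u).le
  rw [← exp_add, add_neg_cancel, exp_zero] at h
  linarith

lemma sqrt_mul_exp_le {k r a : ℝ} (hk : 0 ≤ k) (hr : 0 ≤ r) (hr4 : r ≤ 1 / 4) (ha : 0 ≤ a) :
    √(k * r * (a + 1) * exp (k * r * (a + 1))) ≤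
      √k * exp (k / 8) * exp (k / 2 * r * a) * r ^ ((1 : ℝ) / 2) * (a + 1) := by
  have hsqrt : √(a + 1) ≤ a + 1 := by
    rw [sqrt_le_left (by positivity)]
    nlinarith
  have hexp : exp (k * r * (a + 1) / 2) ≤ exp (k / 8) * exp (k / 2 * r * a) := by
    rw [← exp_add]
    gcongr
    nlinarith [mul_nonneg hk (sub_nonneg.mpr hr4)]
  rw [sqrt_mul (by positivity), sqrt_mul (by positivity), sqrt_mul (by positivity),
    ← exp_half, ← sqrt_eq_rpow]
  calc √k * √r * √(a + 1) * exp (k * r * (a + 1) / 2)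
      ≤ √k * √r * (a + 1) * (exp (k / 8) * exp (k / 2 * r * a)) := by gcongr
    _ = _ := by ring

section HeatKernel

variable {d : ℕ}

lemma heatKernel_pos {t : ℝ} (ht : 0 < t) (z : EuclideanSpace ℝ (Fin d)) :
    0 < heatKernel d t z := by
  unfold heatKernel
  positivity

lemma integral_heatKernel {t : ℝ} (ht : 0 < t) :
    ∫ z, heatKernel d t z = 1 := by
  have hexp (z : EuclideanSpace ℝ (Fin d)) :
      -‖z‖ ^ 2 / (2 * t) = -(2 * t)⁻¹ * ‖z‖ ^ 2 := by ring
  simp only [heatKernel, hexp]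
  rw [integral_const_mul, GaussianFourier.integral_rexp_neg_mul_sq_norm (by positivity),
    finrank_euclideanSpace_fin, div_inv_eq_mul, neg_div,
    show π * (2 * t) = 2 * π * t by ring, ← rpow_add (by positivity), neg_add_cancel, rpow_zero]

lemma integrable_heatKernel {t : ℝ} (ht : 0 < t) : Integrable (heatKernel d t) :=
  Integrable.of_integral_ne_zero (by rw [integral_heatKernel ht]; exact one_ne_zero)

lemma heatKernel_mul_heatKernel_sub {a b : ℝ} (ha : 0 < a) (hb : 0 < b)
    (x z : EuclideanSpace ℝ (Fin d)) :
    heatKernel d a z * heatKernel d b (x - z) =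
      heatKernel d (a + b) x * heatKernel d (a * b / (a + b)) (z - (a / (a + b)) • x) := by
  have hab : 0 < a + b := by positivity
  unfold heatKernel
  rw [mul_mul_mul_comm, mul_mul_mul_comm ((2 * π * (a + b)) ^ (-(d : ℝ) / 2)),
    ← mul_rpow (by positivity) (by positivity), ← mul_rpow (by positivity) (by positivity),
    ← exp_add, ← exp_add]
  congr 2
  · field_simp
  · rw [norm_sub_sq_real x z, norm_sub_sq_real, real_inner_smul_right, norm_smul,
      real_inner_comm, Real.norm_eq_abs, abs_of_pos (div_pos ha hab)]
    field_simp
    ring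

lemma integral_heatKernel_mul_heatKernel_sub {a b : ℝ} (ha : 0 < a) (hb : 0 < b)
    (x : EuclideanSpace ℝ (Fin d)) :
    ∫ z, heatKernel d a z * heatKernel d b (x - z) = heatKernel d (a + b) x := by
  simp only [heatKernel_mul_heatKernel_sub ha hb x]
  rw [integral_const_mul, integral_sub_right_eq_self (heatKernel d (a * b / (a + b))),
    integral_heatKernel (by positivity), mul_one]

lemma integrable_heatKernel_mul_heatKernel_sub {a b : ℝ} (ha : 0 < a) (hb : 0 < b)
    (x : EuclideanSpace ℝ (Fin d)) :
    Integrable fun z => heatKernel d a z * heatKernel d b (x - z) :=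
  Integrable.of_integral_ne_zero <| by
    rw [integral_heatKernel_mul_heatKernel_sub ha hb]
    exact (heatKernel_pos (by positivity) x).ne'

lemma heatKernel_sq {t : ℝ} (ht : 0 < t) (z : EuclideanSpace ℝ (Fin d)) :
    heatKernel d t z ^ 2 = (4 * π * t) ^ (-(d : ℝ) / 2) * heatKernel d (t / 2) z := by
  unfold heatKernel
  rw [mul_pow, ← mul_assoc, rpow_pow_comm (by positivity),
    show (2 * π * t) ^ 2 = 4 * π * t * (2 * π * (t / 2)) by ring,
    mul_rpow (by positivity) (by positivity), ← exp_nat_mul]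
  congr 2
  field_simp
  ring

lemma integral_heatKernel_mul_heatKernel_sub_sq {a b : ℝ} (ha : 0 < a) (hb : 0 < b)
    (x : EuclideanSpace ℝ (Fin d)) :
    ∫ z, heatKernel d a z * heatKernel d b (x - z) ^ 2 =
      (4 * π * b) ^ (-(d : ℝ) / 2) * heatKernel d (a + b / 2) x := by
  simp only [heatKernel_sq hb, mul_left_comm (heatKernel d a _)]
  rw [integral_const_mul, integral_heatKernel_mul_heatKernel_sub ha (by positivity)]

lemma integrable_heatKernel_mul_heatKernel_sub_sq {a b : ℝ} (ha : 0 < a) (hb : 0 < b)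
    (x : EuclideanSpace ℝ (Fin d)) :
    Integrable fun z => heatKernel d a z * heatKernel d b (x - z) ^ 2 :=
  Integrable.of_integral_ne_zero <| by
    rw [integral_heatKernel_mul_heatKernel_sub_sq ha hb]
    exact (mul_pos (rpow_pos_of_pos (by positivity) _) (heatKernel_pos (by positivity) x)).ne'

lemma mul_heatKernel_div_heatKernel_sq {ℓ s : ℝ} (hℓ : 0 < ℓ) (hℓs : ℓ < s)
    (x : EuclideanSpace ℝ (Fin d)) :
    (4 * π * (s - ℓ)) ^ (-(d : ℝ) / 2) * heatKernel d ((s + ℓ) / 2) x / heatKernel d s x ^ 2 =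
      (s ^ 2 / (s ^ 2 - ℓ ^ 2)) ^ ((d : ℝ) / 2) * exp (ℓ * ‖x‖ ^ 2 / (s * (s + ℓ))) := by
  have hs : 0 < s := hℓ.trans hℓs
  have hsℓ : 0 < s - ℓ := by linarith
  have hsqℓ : 0 < s ^ 2 - ℓ ^ 2 := by nlinarith
  have hprefactor : (s ^ 2 / (s ^ 2 - ℓ ^ 2)) ^ ((d : ℝ) / 2) =
      ((2 * π * s) ^ ((d : ℝ) / 2)) ^ 2 /
        ((4 * π * (s - ℓ)) ^ ((d : ℝ) / 2) * (2 * π * ((s + ℓ) / 2)) ^ ((d : ℝ) / 2)) := by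
    rw [rpow_pow_comm (by positivity), ← mul_rpow (by positivity) (by positivity),
      ← div_rpow (by positivity) (by positivity)]
    congr 1
    field_simp
    ring
  have hexp : exp (ℓ * ‖x‖ ^ 2 / (s * (s + ℓ))) =
      exp (-‖x‖ ^ 2 / (2 * ((s + ℓ) / 2))) / exp (-‖x‖ ^ 2 / (2 * s)) ^ 2 := by
    rw [← exp_nat_mul, ← exp_sub]
    congr 1
    field_simp
    ring
  rw [hprefactor, hexp]
  simp only [heatKernel, neg_div _ (d : ℝ), rpow_neg (by positivity : (0 : ℝ) ≤ 2 * π * s),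
    rpow_neg (by positivity : (0 : ℝ) ≤ 4 * π * (s - ℓ)),
    rpow_neg (by positivity : (0 : ℝ) ≤ 2 * π * ((s + ℓ) / 2))]
  field_simp

lemma heatKernel_mul_div_sub_one_sq_eq (c : ℝ) {ℓ t : ℝ} (x z : EuclideanSpace ℝ (Fin d)) :
    heatKernel d ℓ z * (heatKernel d t (x - z) / c - 1) ^ 2 =
      heatKernel d ℓ z * heatKernel d t (x - z) ^ 2 / c ^ 2 -
        2 * (heatKernel d ℓ z * heatKernel d t (x - z)) / c + heatKernel d ℓ z := by
  ring

lemma integrable_heatKernel_mul_div_sub_one_sq {ℓ t : ℝ} (hℓ : 0 < ℓ) (ht : 0 < t) (c : ℝ)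
    (x : EuclideanSpace ℝ (Fin d)) :
    Integrable fun z => heatKernel d ℓ z * (heatKernel d t (x - z) / c - 1) ^ 2 := by
  simp only [heatKernel_mul_div_sub_one_sq_eq c x]
  exact (((integrable_heatKernel_mul_heatKernel_sub_sq hℓ ht x).div_const _).sub
    (((integrable_heatKernel_mul_heatKernel_sub hℓ ht x).const_mul 2).div_const _)).add
    (integrable_heatKernel hℓ)

lemma integral_heatKernel_mul_div_sub_one_sq {ℓ s : ℝ} (hℓ : 0 < ℓ) (hℓs : ℓ < s)
    (x : EuclideanSpace ℝ (Fin d)) :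
    ∫ z, heatKernel d ℓ z * (heatKernel d (s - ℓ) (x - z) / heatKernel d s x - 1) ^ 2 =
      (s ^ 2 / (s ^ 2 - ℓ ^ 2)) ^ ((d : ℝ) / 2) * exp (ℓ * ‖x‖ ^ 2 / (s * (s + ℓ))) - 1 := by
  have hsℓ : 0 < s - ℓ := by linarith
  have hρ := heatKernel_pos (d := d) (hℓ.trans hℓs) x
  have hi2 := (integrable_heatKernel_mul_heatKernel_sub_sq hℓ hsℓ x).div_const
    (heatKernel d s x ^ 2)
  have hi1 := ((integrable_heatKernel_mul_heatKernel_sub hℓ hsℓ x).const_mul 2).div_const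
    (heatKernel d s x)
  simp only [heatKernel_mul_div_sub_one_sq_eq (heatKernel d s x) x]
  rw [integral_add _ (integrable_heatKernel hℓ), integral_sub hi2 hi1,
    integral_div, integral_div,
    integral_const_mul, integral_heatKernel_mul_heatKernel_sub_sq hℓ hsℓ,
    integral_heatKernel_mul_heatKernel_sub hℓ hsℓ, integral_heatKernel hℓ,
    show ℓ + (s - ℓ) / 2 = (s + ℓ) / 2 by ring, show ℓ + (s - ℓ) = s by ring,
    mul_heatKernel_div_heatKernel_sq hℓ hℓs, mul_div_cancel_right₀ _ hρ.ne']
  · ring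
  · exact hi2.sub hi1

lemma integral_heatKernel_mul_div_sub_one_sq_le {ℓ s : ℝ} (hℓ : 0 < ℓ) (hℓs : 2 * ℓ ≤ s)
    (x : EuclideanSpace ℝ (Fin d)) :
    ∫ z, heatKernel d ℓ z * (heatKernel d (s - ℓ) (x - z) / heatKernel d s x - 1) ^ 2 ≤
      exp (d * (ℓ / s) ^ 2 + ℓ * ‖x‖ ^ 2 / s ^ 2) - 1 := by
  have hs : 0 < s := by linarith
  have hratio : s ^ 2 / (s ^ 2 - ℓ ^ 2) = (1 - (ℓ / s) ^ 2)⁻¹ := by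
    have : 0 < s ^ 2 - ℓ ^ 2 := by nlinarith
    field_simp
  have hℓs2 : (ℓ / s) ^ 2 ≤ 1 / 2 := by
    rw [div_pow, div_le_iff₀ (by positivity)]
    nlinarith
  have hprefactor : (s ^ 2 / (s ^ 2 - ℓ ^ 2)) ^ ((d : ℝ) / 2) ≤ exp (d * (ℓ / s) ^ 2) :=
    calc (s ^ 2 / (s ^ 2 - ℓ ^ 2)) ^ ((d : ℝ) / 2)
        ≤ exp (2 * (ℓ / s) ^ 2) ^ ((d : ℝ) / 2) := by
          rw [hratio]
          gcongr
          · exact inv_nonneg.mpr (by linarith)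
          · exact inv_one_sub_le_exp_two_mul (by positivity) hℓs2
      _ = exp (d * (ℓ / s) ^ 2) := by rw [← exp_mul]; ring_nf
  have hexp : exp (ℓ * ‖x‖ ^ 2 / (s * (s + ℓ))) ≤ exp (ℓ * ‖x‖ ^ 2 / s ^ 2) := by
    gcongr
    nlinarith
  rw [integral_heatKernel_mul_div_sub_one_sq hℓ (by linarith), exp_add]
  gcongr

end HeatKernel

theorem stmt_6_general (d : ℕ) :
    ∃ C c δ₀ : ℝ, 0 < C ∧ 0 < c ∧ 0 < δ₀ ∧ δ₀ < 1 / 2 ∧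
      ∀ T ℓ : ℝ, 0 < T → 0 < ℓ → ℓ / T ≤ δ₀ → ∀ y : EuclideanSpace ℝ (Fin d),
        (∫ Z, heatKernel d ℓ Z *
            |heatKernel d (T / 2 - ℓ) (Real.sqrt T • y - Z) /
                heatKernel d (T / 2) (Real.sqrt T • y) - 1| ∂volume) ≤
          C * Real.exp (c * (ℓ / T) * ‖y‖ ^ 2) * (ℓ / T) ^ ((1 : ℝ) / 2) *
            (‖y‖ ^ 2 + 1) := by
  refine ⟨√((d : ℝ) + 4) * exp (((d : ℝ) + 4) / 8), ((d : ℝ) + 4) / 2, 1 / 4,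
    by positivity, by positivity, by norm_num, by norm_num, ?_⟩
  intro T ℓ hT hℓ hδ y
  have hr : 0 ≤ ℓ / T := by positivity
  have hℓT : 2 * ℓ ≤ T / 2 := by rw [div_le_iff₀ hT] at hδ; linarith
  set u := ((d : ℝ) + 4) * (ℓ / T) * (‖y‖ ^ 2 + 1)
  have hexponent : d * (ℓ / (T / 2)) ^ 2 + ℓ * ‖√T • y‖ ^ 2 / (T / 2) ^ 2 ≤ u := by
    rw [norm_smul, mul_pow, norm_of_nonneg (sqrt_nonneg T), sq_sqrt hT.le,
      show ℓ / (T / 2) = 2 * (ℓ / T) by ring,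
      show ℓ * (T * ‖y‖ ^ 2) / (T / 2) ^ 2 = 4 * (ℓ / T) * ‖y‖ ^ 2 by field_simp; ring]
    nlinarith [mul_nonneg (mul_nonneg d.cast_nonneg hr) (sub_nonneg.mpr hδ),
      mul_nonneg hr (sq_nonneg ‖y‖)]
  have hvariance : ∫ Z, heatKernel d ℓ Z * (heatKernel d (T / 2 - ℓ) (√T • y - Z) /
      heatKernel d (T / 2) (√T • y) - 1) ^ 2 ≤ u * exp u :=
    calc _ ≤ exp (d * (ℓ / (T / 2)) ^ 2 + ℓ * ‖√T • y‖ ^ 2 / (T / 2) ^ 2) - 1 :=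
          integral_heatKernel_mul_div_sub_one_sq_le hℓ hℓT _
      _ ≤ exp u - 1 := by gcongr
      _ ≤ u * exp u := exp_sub_one_le_mul_exp u
  calc _ ≤ √(u * exp u) :=
        integral_mul_abs_le_sqrt_of_integral_mul_sq_le (fun Z => (heatKernel_pos hℓ Z).le)
          (integrable_heatKernel hℓ) (integral_heatKernel hℓ)
          (integrable_heatKernel_mul_div_sub_one_sq hℓ (by linarith) _ _) hvariance
          (by positivity)
    _ ≤ _ := sqrt_mul_exp_le (by positivity) hr (by linarith) (sq_nonneg _)

/-- There are constants `C > 0`, `c > 0` and `δ₀ ∈ (0, 1/2)`, depending only on `d`, such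
that for all `T > 0`, all `ℓ > 0` with `ℓ/T ≤ δ₀` and all `y ∈ ℝ^d`,
`∫ ρ_ℓ(Z) |ρ_{T/2-ℓ}(√T y - Z)/ρ_{T/2}(√T y) - 1| dZ
  ≤ C exp(c (ℓ/T) |y|²) (ℓ/T)^{1/2} (|y|² + 1)`. -/
theorem stmt_6 (d : ℕ) (hd : 1 ≤ d) :
    ∃ C c δ₀ : ℝ, 0 < C ∧ 0 < c ∧ 0 < δ₀ ∧ δ₀ < 1 / 2 ∧
      ∀ T ℓ : ℝ, 0 < T → 0 < ℓ → ℓ / T ≤ δ₀ → ∀ y : EuclideanSpace ℝ (Fin d),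
        (∫ Z, heatKernel d ℓ Z *
            |heatKernel d (T / 2 - ℓ) (Real.sqrt T • y - Z) /
                heatKernel d (T / 2) (Real.sqrt T • y) - 1| ∂volume) ≤
          C * Real.exp (c * (ℓ / T) * ‖y‖ ^ 2) * (ℓ / T) ^ ((1 : ℝ) / 2) *
            (‖y‖ ^ 2 + 1) :=
  stmt_6_general d
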